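/- arXiv:1005.0468 — 3 statements merged into one kernel-verified Lean document; each statement's English description precedes it below -/
import Mathlib

section
/- Let A be a path graph on m vertices (type A_m Dynkin diagram), let x₁,…,x_m > 0, define d_i = 2x_i + ∑_{j adjacent to i} x_j, and for each edge (i,i+1) define the variable L_i. Then for m ≤ 4 the quadratic form Q(L) = ∑_i (1 − x_i/d_{i+1} − x_{i+1}/d_i) L_i² + 2∑_i (√(x_i x_{i+2})/d_{i+1}) L_i L_{i+1} is positive definite. -/
open Finset

private lemma sqpos {a : ℝ} (h : a ≠ 0) : 0 < a ^ 2 :=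
  lt_of_le_of_ne (sq_nonneg a) (Ne.symm (pow_ne_zero 2 h))

private lemma aux2 (a1 a2 c1 L1 L2 : ℝ) (ha1 : 0 < a1)
    (hD2 : 0 < a1 * a2 - c1 ^ 2) (hL : L1 ≠ 0 ∨ L2 ≠ 0) :
    0 < a1 * L1 ^ 2 + a2 * L2 ^ 2 + 2 * (c1 * L1 * L2) := by
  have key : a1 * (a1 * L1 ^ 2 + a2 * L2 ^ 2 + 2 * (c1 * L1 * L2))
      = (a1 * L1 + c1 * L2) ^ 2 + (a1 * a2 - c1 ^ 2) * L2 ^ 2 := by ring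
  have hpos : 0 < (a1 * L1 + c1 * L2) ^ 2 + (a1 * a2 - c1 ^ 2) * L2 ^ 2 := by
    rcases eq_or_ne L2 0 with h2 | h2
    · have h1 : L1 ≠ 0 := by tauto
      have hs : 0 < (a1 * L1 + c1 * L2) ^ 2 := by
        rw [h2]; simpa using sqpos (mul_ne_zero ha1.ne' h1)
      nlinarith [mul_nonneg hD2.le (sq_nonneg L2)]
    · nlinarith [sq_nonneg (a1 * L1 + c1 * L2), mul_pos hD2 (sqpos h2)]
  by_contra hcon
  push_neg at hcon
  nlinarith [mul_nonpos_of_nonneg_of_nonpos ha1.le hcon]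

private lemma aux3 (a1 a2 a3 c1 c2 L1 L2 L3 : ℝ) (ha1 : 0 < a1)
    (hD2 : 0 < a1 * a2 - c1 ^ 2)
    (hD3 : 0 < a3 * (a1 * a2 - c1 ^ 2) - a1 * c2 ^ 2)
    (hL : L1 ≠ 0 ∨ L2 ≠ 0 ∨ L3 ≠ 0) :
    0 < a1 * L1 ^ 2 + a2 * L2 ^ 2 + a3 * L3 ^ 2 + 2 * (c1 * L1 * L2 + c2 * L2 * L3) := by
  have key : a1 * (a1 * a2 - c1 ^ 2) *
      (a1 * L1 ^ 2 + a2 * L2 ^ 2 + a3 * L3 ^ 2 + 2 * (c1 * L1 * L2 + c2 * L2 * L3))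
      = (a1 * a2 - c1 ^ 2) * (a1 * L1 + c1 * L2) ^ 2
        + ((a1 * a2 - c1 ^ 2) * L2 + a1 * c2 * L3) ^ 2
        + a1 * (a3 * (a1 * a2 - c1 ^ 2) - a1 * c2 ^ 2) * L3 ^ 2 := by ring
  have hc : 0 < a1 * (a1 * a2 - c1 ^ 2) := mul_pos ha1 hD2
  have hpos : 0 < (a1 * a2 - c1 ^ 2) * (a1 * L1 + c1 * L2) ^ 2
        + ((a1 * a2 - c1 ^ 2) * L2 + a1 * c2 * L3) ^ 2
        + a1 * (a3 * (a1 * a2 - c1 ^ 2) - a1 * c2 ^ 2) * L3 ^ 2 := by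
    rcases eq_or_ne L3 0 with h3 | h3
    · rcases eq_or_ne L2 0 with h2 | h2
      · have h1 : L1 ≠ 0 := by tauto
        have hs : 0 < (a1 * L1 + c1 * L2) ^ 2 := by
          rw [h2]; simpa using sqpos (mul_ne_zero ha1.ne' h1)
        nlinarith [sq_nonneg ((a1 * a2 - c1 ^ 2) * L2 + a1 * c2 * L3),
          mul_pos hD2 hs, mul_nonneg (mul_pos ha1 hD3).le (sq_nonneg L3)]
      · have hs : 0 < ((a1 * a2 - c1 ^ 2) * L2 + a1 * c2 * L3) ^ 2 := by
          rw [h3]; simpa using sqpos (mul_ne_zero hD2.ne' h2)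
        nlinarith [mul_nonneg hD2.le (sq_nonneg (a1 * L1 + c1 * L2)),
          mul_nonneg (mul_pos ha1 hD3).le (sq_nonneg L3)]
    · nlinarith [mul_nonneg hD2.le (sq_nonneg (a1 * L1 + c1 * L2)),
        sq_nonneg ((a1 * a2 - c1 ^ 2) * L2 + a1 * c2 * L3),
        mul_pos (mul_pos ha1 hD3) (sqpos h3)]
  by_contra hcon
  push_neg at hcon
  nlinarith [mul_nonpos_of_nonneg_of_nonpos hc.le hcon]

private theorem main2 (x d : ℕ → ℝ)
    (hxpos : ∀ i, 1 ≤ i → i ≤ 2 → 0 < x i)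
    (hx0 : x 0 = 0) (hxm : x 3 = 0)
    (hd : ∀ i, d i = 2 * x i + x (i - 1) + x (i + 1)) :
    ∀ L : Fin 1 → ℝ, L ≠ 0 →
      0 < (∑ i : Fin 1,
            (1 - x ((i : ℕ) + 1) / d ((i : ℕ) + 2) - x ((i : ℕ) + 2) / d ((i : ℕ) + 1))
              * L i ^ 2)
          + 2 * ∑ i : Fin 1, ∑ j : Fin 1,
              (if (j : ℕ) = (i : ℕ) + 1 then
                Real.sqrt (x ((i : ℕ) + 1) * x ((i : ℕ) + 3)) / d ((i : ℕ) + 2)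
                  * L i * L j
              else 0) := by
  intro L hL
  simp only [Fin.sum_univ_one, Fin.val_zero]
  norm_num
  have hx1 := hxpos 1 (by norm_num) (by norm_num)
  have hx2 := hxpos 2 (by norm_num) (by norm_num)
  have hd1 : d 1 = 2 * x 1 + x 2 := by rw [hd]; norm_num [hx0]
  have hd2 : d 2 = 2 * x 2 + x 1 := by rw [hd]; norm_num [hxm]
  have p1 : (0:ℝ) < 2 * x 1 + x 2 := by linarith
  have p2 : (0:ℝ) < 2 * x 2 + x 1 := by linarith
  have e1 : 1 - x 1 / d 2 - x 2 / d 1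
      = (3 * x 1 * x 2) / ((2 * x 1 + x 2) * (2 * x 2 + x 1)) := by
    rw [hd1, hd2]; field_simp; ring
  have hA1 : 0 < 1 - x 1 / d 2 - x 2 / d 1 := by
    rw [e1]
    apply div_pos (by nlinarith [mul_pos hx1 hx2]) (mul_pos p1 p2)
  have h0 : L 0 ≠ 0 := by
    intro h
    apply hL
    funext i
    fin_cases i
    exact h
  calc (0:ℝ) < (1 - x 1 / d 2 - x 2 / d 1) * L 0 ^ 2 := mul_pos hA1 (sqpos h0)
    _ ≤ _ := by nlinarith []

private theorem main3 (x d : ℕ → ℝ)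
    (hxpos : ∀ i, 1 ≤ i → i ≤ 3 → 0 < x i)
    (hx0 : x 0 = 0) (hxm : x 4 = 0)
    (hd : ∀ i, d i = 2 * x i + x (i - 1) + x (i + 1)) :
    ∀ L : Fin 2 → ℝ, L ≠ 0 →
      0 < (∑ i : Fin 2,
            (1 - x ((i : ℕ) + 1) / d ((i : ℕ) + 2) - x ((i : ℕ) + 2) / d ((i : ℕ) + 1))
              * L i ^ 2)
          + 2 * ∑ i : Fin 2, ∑ j : Fin 2,
              (if (j : ℕ) = (i : ℕ) + 1 then
                Real.sqrt (x ((i : ℕ) + 1) * x ((i : ℕ) + 3)) / d ((i : ℕ) + 2)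
                  * L i * L j
              else 0) := by
  intro L hL
  simp only [Fin.sum_univ_two, Fin.val_zero, Fin.val_one]
  norm_num
  have hx1 := hxpos 1 (by norm_num) (by norm_num)
  have hx2 := hxpos 2 (by norm_num) (by norm_num)
  have hx3 := hxpos 3 (by norm_num) (by norm_num)
  have hd1 : d 1 = 2 * x 1 + x 2 := by rw [hd]; norm_num [hx0]
  have hd2 : d 2 = 2 * x 2 + x 1 + x 3 := by rw [hd]
  have hd3 : d 3 = 2 * x 3 + x 2 := by rw [hd]; norm_num [hxm]
  have p1 : (0:ℝ) < 2 * x 1 + x 2 := by linarith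
  have p2 : (0:ℝ) < 2 * x 2 + x 1 + x 3 := by linarith
  have p3 : (0:ℝ) < 2 * x 3 + x 2 := by linarith
  have hs13 : Real.sqrt (x 1 * x 3) ^ 2 = x 1 * x 3 :=
    Real.sq_sqrt (by positivity)
  have hA1 : 0 < 1 - x 1 / d 2 - x 2 / d 1 := by
    have e1 : 1 - x 1 / d 2 - x 2 / d 1
        = (3 * x 1 * x 2 + 2 * x 1 * x 3) / ((2 * x 1 + x 2) * (2 * x 2 + x 1 + x 3)) := by
      rw [hd1, hd2]; field_simp; ring
    rw [e1]
    exact div_pos (by nlinarith [mul_pos hx1 hx2, mul_pos hx1 hx3]) (mul_pos p1 p2)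
  have hD2 : 0 < (1 - x 1 / d 2 - x 2 / d 1) * (1 - x 2 / d 3 - x 3 / d 2)
      - (Real.sqrt (x 1 * x 3) / d 2) ^ 2 := by
    have e2 : (1 - x 1 / d 2 - x 2 / d 1) * (1 - x 2 / d 3 - x 3 / d 2)
        - (Real.sqrt (x 1 * x 3) / d 2) ^ 2
        = (4 * x 1 * x 2 * x 3 ^ 2 + 8 * x 1 * x 2 ^ 2 * x 3 + 4 * x 1 ^ 2 * x 2 * x 3)
          / ((2 * x 1 + x 2) * (2 * x 2 + x 1 + x 3) ^ 2 * (2 * x 3 + x 2)) := by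
      rw [div_pow, hs13, hd1, hd2, hd3]; field_simp; ring
    rw [e2]
    refine div_pos ?_ (by positivity)
    nlinarith [mul_pos (mul_pos hx1 hx2) (mul_pos hx3 hx3),
      mul_pos (mul_pos hx1 hx2) (mul_pos hx2 hx3),
      mul_pos (mul_pos hx1 hx1) (mul_pos hx2 hx3)]
  have hdisj : L 0 ≠ 0 ∨ L 1 ≠ 0 := by
    by_contra h
    push_neg at h
    exact hL (funext fun i => by fin_cases i <;> simp [h.1, h.2])
  exact aux2 _ _ _ _ _ hA1 hD2 hdisj

set_option maxHeartbeats 2000000 in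
private theorem main4 (x d : ℕ → ℝ)
    (hxpos : ∀ i, 1 ≤ i → i ≤ 4 → 0 < x i)
    (hx0 : x 0 = 0) (hxm : x 5 = 0)
    (hd : ∀ i, d i = 2 * x i + x (i - 1) + x (i + 1)) :
    ∀ L : Fin 3 → ℝ, L ≠ 0 →
      0 < (∑ i : Fin 3,
            (1 - x ((i : ℕ) + 1) / d ((i : ℕ) + 2) - x ((i : ℕ) + 2) / d ((i : ℕ) + 1))
              * L i ^ 2)
          + 2 * ∑ i : Fin 3, ∑ j : Fin 3,
              (if (j : ℕ) = (i : ℕ) + 1 then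
                Real.sqrt (x ((i : ℕ) + 1) * x ((i : ℕ) + 3)) / d ((i : ℕ) + 2)
                  * L i * L j
              else 0) := by
  intro L hL
  simp only [Fin.sum_univ_three, Fin.val_zero, Fin.val_one, Fin.val_two]
  norm_num
  have hx1 := hxpos 1 (by norm_num) (by norm_num)
  have hx2 := hxpos 2 (by norm_num) (by norm_num)
  have hx3 := hxpos 3 (by norm_num) (by norm_num)
  have hx4 := hxpos 4 (by norm_num) (by norm_num)
  have hd1 : d 1 = 2 * x 1 + x 2 := by rw [hd]; norm_num [hx0]
  have hd2 : d 2 = 2 * x 2 + x 1 + x 3 := by rw [hd]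
  have hd3 : d 3 = 2 * x 3 + x 2 + x 4 := by rw [hd]
  have hd4 : d 4 = 2 * x 4 + x 3 := by rw [hd]; norm_num [hxm]
  have p1 : (0:ℝ) < 2 * x 1 + x 2 := by linarith
  have p2 : (0:ℝ) < 2 * x 2 + x 1 + x 3 := by linarith
  have p3 : (0:ℝ) < 2 * x 3 + x 2 + x 4 := by linarith
  have p4 : (0:ℝ) < 2 * x 4 + x 3 := by linarith
  have hs13 : Real.sqrt (x 1 * x 3) ^ 2 = x 1 * x 3 :=
    Real.sq_sqrt (by positivity)
  have hs24 : Real.sqrt (x 2 * x 4) ^ 2 = x 2 * x 4 :=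
    Real.sq_sqrt (by positivity)
  have hA1 : 0 < 1 - x 1 / d 2 - x 2 / d 1 := by
    have e1 : 1 - x 1 / d 2 - x 2 / d 1
        = (3 * x 1 * x 2 + 2 * x 1 * x 3) / ((2 * x 1 + x 2) * (2 * x 2 + x 1 + x 3)) := by
      rw [hd1, hd2]; field_simp; ring
    rw [e1]
    exact div_pos (by nlinarith [mul_pos hx1 hx2, mul_pos hx1 hx3]) (mul_pos p1 p2)
  have hD2 : 0 < (1 - x 1 / d 2 - x 2 / d 1) * (1 - x 2 / d 3 - x 3 / d 2)
      - (Real.sqrt (x 1 * x 3) / d 2) ^ 2 := by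
    have e2 : (1 - x 1 / d 2 - x 2 / d 1) * (1 - x 2 / d 3 - x 3 / d 2)
        - (Real.sqrt (x 1 * x 3) / d 2) ^ 2
        = (3 * (x 1 * x 2 * x 3 * x 4) + 4 * (x 1 * x 2 * x 3 ^ 2)
            + 6 * (x 1 * x 2 ^ 2 * x 4) + 8 * (x 1 * x 2 ^ 2 * x 3)
            + 3 * (x 1 ^ 2 * x 2 * x 4) + 4 * (x 1 ^ 2 * x 2 * x 3))
          / ((2 * x 1 + x 2) * (2 * x 2 + x 1 + x 3) ^ 2 * (2 * x 3 + x 2 + x 4)) := by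
      rw [div_pow, hs13, hd1, hd2, hd3]; field_simp; ring
    rw [e2]
    refine div_pos ?_ (by positivity)
    nlinarith [mul_pos (mul_pos hx1 hx2) (mul_pos hx3 hx4),
      mul_pos (mul_pos hx1 hx2) (mul_pos hx3 hx3),
      mul_pos (mul_pos hx1 hx2) (mul_pos hx2 hx4),
      mul_pos (mul_pos hx1 hx2) (mul_pos hx2 hx3),
      mul_pos (mul_pos hx1 hx1) (mul_pos hx2 hx4),
      mul_pos (mul_pos hx1 hx1) (mul_pos hx2 hx3)]
  have hD3 : 0 < (1 - x 3 / d 4 - x 4 / d 3) *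
        ((1 - x 1 / d 2 - x 2 / d 1) * (1 - x 2 / d 3 - x 3 / d 2)
          - (Real.sqrt (x 1 * x 3) / d 2) ^ 2)
      - (1 - x 1 / d 2 - x 2 / d 1) * (Real.sqrt (x 2 * x 4) / d 3) ^ 2 := by
    have e3 : (1 - x 3 / d 4 - x 4 / d 3) *
        ((1 - x 1 / d 2 - x 2 / d 1) * (1 - x 2 / d 3 - x 3 / d 2)
          - (Real.sqrt (x 1 * x 3) / d 2) ^ 2)
      - (1 - x 1 / d 2 - x 2 / d 1) * (Real.sqrt (x 2 * x 4) / d 3) ^ 2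
        = (5 * (x 1 * x 2 * x 3 ^ 2 * x 4 ^ 2) + 10 * (x 1 * x 2 * x 3 ^ 3 * x 4)
            + 10 * (x 1 * x 2 ^ 2 * x 3 * x 4 ^ 2) + 25 * (x 1 * x 2 ^ 2 * x 3 ^ 2 * x 4)
            + 10 * (x 1 * x 2 ^ 3 * x 3 * x 4) + 5 * (x 1 ^ 2 * x 2 * x 3 * x 4 ^ 2)
            + 10 * (x 1 ^ 2 * x 2 * x 3 ^ 2 * x 4) + 5 * (x 1 ^ 2 * x 2 ^ 2 * x 3 * x 4))
          / ((2 * x 1 + x 2) * (2 * x 2 + x 1 + x 3) ^ 2 * (2 * x 3 + x 2 + x 4) ^ 2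
              * (2 * x 4 + x 3)) := by
      rw [div_pow, div_pow, hs13, hs24, hd1, hd2, hd3, hd4]; field_simp; ring
    rw [e3]
    refine div_pos ?_ (by positivity)
    have m1 := mul_pos (mul_pos hx1 hx2) (mul_pos hx3 hx4)
    nlinarith [mul_pos m1 (mul_pos hx3 hx4), mul_pos m1 (mul_pos hx3 hx3),
      mul_pos m1 (mul_pos hx2 hx4), mul_pos m1 (mul_pos hx2 hx3),
      mul_pos m1 (mul_pos hx2 hx2), mul_pos m1 (mul_pos hx1 hx4),
      mul_pos m1 (mul_pos hx1 hx3), mul_pos m1 (mul_pos hx1 hx2)]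
  have hdisj : L 0 ≠ 0 ∨ L 1 ≠ 0 ∨ L 2 ≠ 0 := by
    by_contra h
    push_neg at h
    exact hL (funext fun i => by fin_cases i <;> simp [h.1, h.2.1, h.2.2])
  exact aux3 _ _ _ _ _ _ _ _ hA1 hD2 hD3 hdisj

/-- Type `A_m` positive definiteness for small rank: for `2 ≤ m ≤ 4` and positive reals
`x₁,…,x_m` (with `x₀ = x_{m+1} = 0` and `d_i = 2x_i + x_{i−1} + x_{i+1}`), the quadratic
form `Q(L) = ∑ (1 − x_i/d_{i+1} − x_{i+1}/d_i)·L_i² + 2∑ (√(x_i x_{i+2})/d_{i+1})·L_i L_{i+1}`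
on the edge variables `L ∈ ℝ^{m−1}` is positive definite. -/
theorem stmt_11 (m : ℕ) (hm2 : 2 ≤ m) (hm4 : m ≤ 4) (x d : ℕ → ℝ)
    (hxpos : ∀ i, 1 ≤ i → i ≤ m → 0 < x i)
    (hx0 : x 0 = 0) (hxm : x (m + 1) = 0)
    (hd : ∀ i, d i = 2 * x i + x (i - 1) + x (i + 1)) :
    ∀ L : Fin (m - 1) → ℝ, L ≠ 0 →
      0 < (∑ i : Fin (m - 1),
            (1 - x ((i : ℕ) + 1) / d ((i : ℕ) + 2) - x ((i : ℕ) + 2) / d ((i : ℕ) + 1))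
              * L i ^ 2)
          + 2 * ∑ i : Fin (m - 1), ∑ j : Fin (m - 1),
              (if (j : ℕ) = (i : ℕ) + 1 then
                Real.sqrt (x ((i : ℕ) + 1) * x ((i : ℕ) + 3)) / d ((i : ℕ) + 2)
                  * L i * L j
              else 0) := by
  interval_cases m
  · exact main2 x d hxpos hx0 hxm hd
  · exact main3 x d hxpos hx0 hxm hd
  · exact main4 x d hxpos hx0 hxm hd
end

section
/- Let c^{u'}_{-u,h} denote nonnegative integers (Chevalley coefficients) indexed by pairs of simple roots, with c^{u}_{-u,h} = 2, c^{u'}_{-u,h} = 1 if ⟨u^∨, u'⟩ < 0, and 0 otherwise (for a simply-laced root system restricted to the relevant roots), and define d_u = ∑_{u'} c^{u'}_{-u,h} x_{u'} for positive reals x_u. Then the two quadratic forms q(y) = ∑_{u,u'} c^{u'}_{-u,h} y_u y_{u'} − ∑_{u,u'} (∑_{u''} (x_{u''}/d_{u''}) c^{u}_{-u'',h} c^{u'}_{-u'',h}) y_u y_{u'} and q'(y) = ∑_{u<u'} ∑_{u''} (x_{u''}/d_{u''}) c^{u}_{-u'',h} c^{u'}_{-u'',h} L(u,u')² − ∑_{u<u'}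 c^{u'}_{-u,h} L(u,u')², where L(u,u')² = (x_{u'}/x_u)y_u² + (x_u/x_{u'})y_{u'}² − 2y_u y_{u'}, are equal: q(y) = q'(y) for all y. -/
open Finset

private lemma half_sum {ι : Type*} [Fintype ι] [LinearOrder ι]
    (g : ι → ι → ℝ) (gsym : ∀ u u', g u u' = g u' u) (gdiag : ∀ u, g u u = 0) :
    ∑ u, ∑ u', g u u' = 2 * ∑ u, ∑ u' ∈ univ.filter (fun u' => u < u'), g u u' := by
  classical
  set P : Finset (ι × ι) := univ ×ˢ univ with hP
  have h1 : ∑ u, ∑ u', g u u' = ∑ z ∈ P, g z.1 z.2 := by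
    rw [hP, Finset.sum_product']
  have h2 : ∑ u, ∑ u' ∈ univ.filter (fun u' => u < u'), g u u'
      = ∑ z ∈ P.filter (fun z => z.1 < z.2), g z.1 z.2 := by
    conv_rhs => rw [Finset.sum_filter, hP, Finset.sum_product]
    refine sum_congr rfl fun u _ => ?_
    rw [Finset.sum_filter]
  have h3 : ∑ z ∈ P, g z.1 z.2
      = ∑ z ∈ P.filter (fun z => z.1 < z.2), g z.1 z.2
        + ∑ z ∈ P.filter (fun z => ¬ z.1 < z.2), g z.1 z.2 :=
    (Finset.sum_filter_add_sum_filter_not P _ _).symm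
  have h4 : ∑ z ∈ P.filter (fun z => ¬ z.1 < z.2), g z.1 z.2
      = ∑ z ∈ P.filter (fun z => z.2 < z.1), g z.1 z.2 := by
    rw [← Finset.sum_filter_add_sum_filter_not (P.filter fun z => ¬ z.1 < z.2)
      (fun z => z.2 < z.1)]
    have hdiag : ∑ z ∈ (P.filter fun z => ¬ z.1 < z.2).filter (fun z => ¬ z.2 < z.1),
        g z.1 z.2 = 0 := by
      refine Finset.sum_eq_zero fun z hz => ?_
      simp only [Finset.mem_filter] at hz
      have hzz : z.1 = z.2 := le_antisymm (not_lt.mp hz.2) (not_lt.mp hz.1.2)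
      rw [← hzz, gdiag]
    have hset : (P.filter fun z => ¬ z.1 < z.2).filter (fun z => z.2 < z.1)
        = P.filter (fun z => z.2 < z.1) := by
      ext z
      simp only [Finset.mem_filter]
      constructor
      · rintro ⟨⟨h1, _⟩, h2⟩; exact ⟨h1, h2⟩
      · rintro ⟨h1, h2⟩; exact ⟨⟨h1, asymm h2⟩, h2⟩
    rw [hdiag, add_zero, hset]
  have h5 : ∑ z ∈ P.filter (fun z => z.2 < z.1), g z.1 z.2
      = ∑ z ∈ P.filter (fun z => z.1 < z.2), g z.1 z.2 := by
    refine Finset.sum_equiv (Equiv.prodComm ι ι) (fun z => ?_) (fun z _ => ?_)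
    · simp [hP]
    · exact gsym z.1 z.2
  rw [h1, h2, h3, h4, h5]; ring

private lemma keylem {ι : Type*} [Fintype ι] [LinearOrder ι]
    (x : ι → ℝ) (hx : ∀ u, 0 < x u)
    (M : ι → ι → ℝ) (hsym : ∀ u u', M u u' = M u' u)
    (h0 : ∀ u, ∑ u', M u u' * x u' = 0) (y : ι → ℝ) :
    ∑ u, ∑ u', M u u' * (y u * y u')
      = - ∑ u, ∑ u' ∈ univ.filter (fun u' => u < u'),
          M u u' * (x u' / x u * y u ^ 2 + x u / x u' * y u' ^ 2 - 2 * (y u * y u')) := by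
  have gsym : ∀ u u', M u u' * (x u' / x u * y u ^ 2 + x u / x u' * y u' ^ 2 - 2 * (y u * y u'))
      = M u' u * (x u / x u' * y u' ^ 2 + x u' / x u * y u ^ 2 - 2 * (y u' * y u)) := by
    intro u u'; rw [hsym]; ring
  have gdiag : ∀ u, M u u * (x u / x u * y u ^ 2 + x u / x u * y u ^ 2 - 2 * (y u * y u)) = 0 := by
    intro u; rw [div_self (hx u).ne']; ring
  have hT := half_sum
    (fun u u' => M u u' * (x u' / x u * y u ^ 2 + x u / x u' * y u' ^ 2 - 2 * (y u * y u')))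
    gsym gdiag
  have expand : ∀ u u',
      M u u' * (x u' / x u * y u ^ 2 + x u / x u' * y u' ^ 2 - 2 * (y u * y u'))
        = (M u u' * x u') * (y u ^ 2 / x u) + (M u' u * x u) * (y u' ^ 2 / x u')
          - 2 * (M u u' * (y u * y u')) := by
    intro u u'; rw [hsym u u']; ring
  have e1 : ∑ u, ∑ u' : ι, (M u u' * x u') * (y u ^ 2 / x u) = 0 := by
    refine sum_eq_zero fun u _ => ?_
    rw [← Finset.sum_mul, h0, zero_mul]
  have e2 : ∑ u, ∑ u' : ι, (M u' u * x u) * (y u' ^ 2 / x u') = 0 := by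
    rw [Finset.sum_comm]
    refine sum_eq_zero fun u' _ => ?_
    rw [← Finset.sum_mul, h0, zero_mul]
  have hS : ∑ u, ∑ u', M u u' * (x u' / x u * y u ^ 2 + x u / x u' * y u' ^ 2 - 2 * (y u * y u'))
      = -2 * ∑ u, ∑ u', M u u' * (y u * y u') := by
    calc ∑ u, ∑ u', M u u' * (x u' / x u * y u ^ 2 + x u / x u' * y u' ^ 2 - 2 * (y u * y u'))
        = ∑ u, (∑ u' : ι, (M u u' * x u') * (y u ^ 2 / x u)
            + ∑ u' : ι, (M u' u * x u) * (y u' ^ 2 / x u')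
            - ∑ u' : ι, 2 * (M u u' * (y u * y u'))) := by
          refine sum_congr rfl fun u _ => ?_
          rw [← Finset.sum_add_distrib, ← Finset.sum_sub_distrib]
          exact sum_congr rfl fun u' _ => expand u u'
      _ = (∑ u, ∑ u' : ι, (M u u' * x u') * (y u ^ 2 / x u))
            + (∑ u, ∑ u' : ι, (M u' u * x u) * (y u' ^ 2 / x u'))
            - ∑ u, ∑ u' : ι, 2 * (M u u' * (y u * y u')) := by
          rw [← Finset.sum_add_distrib, ← Finset.sum_sub_distrib]
      _ = -2 * ∑ u, ∑ u', M u u' * (y u * y u') := by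
          rw [e1, e2]
          simp only [← Finset.mul_sum]
          ring
  linarith [hS, hT]


/-- The two quadratic forms `q` and `q'` built from the Chevalley coefficients
`c^{u'}_{-u,h}` (equal to `2` on the diagonal, `1` on adjacent pairs of simple roots and `0`
otherwise) and `d_u = ∑ c^{u'}_{-u,h} x_{u'}` agree:
`q(y) = ∑ c_{u,u'} y_u y_{u'} − ∑ (∑_{u''} (x_{u''}/d_{u''}) c_{u'',u} c_{u'',u'}) y_u y_{u'}`
equals
`q'(y) = ∑_{u<u'} (∑_{u''} (x_{u''}/d_{u''}) c_{u'',u} c_{u'',u'}) L(u,u')² − ∑_{u<u'} c_{u,u'} L(u,u')²`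
where `L(u,u')² = (x_{u'}/x_u) y_u² + (x_u/x_{u'}) y_{u'}² − 2 y_u y_{u'}`. -/
theorem stmt_13 (ι : Type*) [Fintype ι] [LinearOrder ι]
    (adj : ι → ι → Prop) [DecidableRel adj]
    (hadjsymm : ∀ u u', adj u u' → adj u' u)
    (hadjirr : ∀ u, ¬ adj u u)
    (c : ι → ι → ℝ)
    (hc : ∀ u u', c u u' = if u = u' then 2 else if adj u u' then 1 else 0)
    (x : ι → ℝ) (hx : ∀ u, 0 < x u)
    (d : ι → ℝ) (hd : ∀ u, d u = ∑ u', c u u' * x u') :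
    ∀ y : ι → ℝ,
      (∑ u, ∑ u', c u u' * (y u * y u'))
        - ∑ u, ∑ u', (∑ u'', x u'' / d u'' * (c u'' u * c u'' u')) * (y u * y u')
      =
      (∑ u, ∑ u' ∈ univ.filter (fun u' => u < u'),
          (∑ u'', x u'' / d u'' * (c u'' u * c u'' u'))
            * (x u' / x u * y u ^ 2 + x u / x u' * y u' ^ 2 - 2 * (y u * y u')))
        - ∑ u, ∑ u' ∈ univ.filter (fun u' => u < u'),
            c u u' * (x u' / x u * y u ^ 2 + x u / x u' * y u' ^ 2 - 2 * (y u * y u')) := by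
  intro y
  have hcs : ∀ u u', c u u' = c u' u := by
    intro u u'
    rw [hc, hc]
    by_cases h : u = u'
    · simp [h]
    · have h' : ¬ u' = u := fun hh => h hh.symm
      by_cases ha : adj u u'
      · simp [h, h', ha, hadjsymm u u' ha]
      · have ha' : ¬ adj u' u := fun hh => ha (hadjsymm u' u hh)
        simp [h, h', ha, ha']
  have hcnn : ∀ u u', 0 ≤ c u u' := by
    intro u u'; rw [hc]
    split_ifs <;> norm_num
  have hdpos : ∀ u, 0 < d u := by
    intro u
    rw [hd]
    have h1 : c u u * x u ≤ ∑ u', c u u' * x u' :=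
      Finset.single_le_sum (f := fun u' => c u u' * x u')
        (fun i _ => mul_nonneg (hcnn u i) (hx i).le) (mem_univ u)
    have h2 : c u u = 2 := by rw [hc]; simp
    nlinarith [hx u]
  set M : ι → ι → ℝ :=
    fun u u' => c u u' - ∑ u'', x u'' / d u'' * (c u'' u * c u'' u') with hM
  have hMsym : ∀ u u', M u u' = M u' u := by
    intro u u'
    simp only [hM]
    rw [hcs u u']
    congr 1
    exact sum_congr rfl fun u'' _ => by ring
  have hBx : ∀ u, ∑ u', (∑ u'', x u'' / d u'' * (c u'' u * c u'' u')) * x u' = d u := by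
    intro u
    calc ∑ u', (∑ u'', x u'' / d u'' * (c u'' u * c u'' u')) * x u'
        = ∑ u', ∑ u'', (x u'' / d u'' * (c u'' u * c u'' u')) * x u' := by
          exact sum_congr rfl fun u' _ => Finset.sum_mul _ _ _
      _ = ∑ u'', ∑ u', (x u'' / d u'' * (c u'' u * c u'' u')) * x u' := Finset.sum_comm
      _ = ∑ u'', (x u'' / d u'' * c u'' u) * ∑ u', c u'' u' * x u' := by
          refine sum_congr rfl fun u'' _ => ?_
          rw [Finset.mul_sum]
          exact sum_congr rfl fun u' _ => by ring
      _ = ∑ u'', (x u'' / d u'' * c u'' u) * d u'' := by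
          exact sum_congr rfl fun u'' _ => by rw [← hd]
      _ = ∑ u'', c u u'' * x u'' := by
          refine sum_congr rfl fun u'' _ => ?_
          rw [hcs u u'', div_mul_eq_mul_div, div_mul_cancel₀ _ (hdpos u'').ne']
          ring
      _ = d u := (hd u).symm
  have hM0 : ∀ u, ∑ u', M u u' * x u' = 0 := by
    intro u
    simp only [hM]
    have : ∑ u', (c u u' - ∑ u'', x u'' / d u'' * (c u'' u * c u'' u')) * x u'
        = ∑ u', c u u' * x u' - ∑ u', (∑ u'', x u'' / d u'' * (c u'' u * c u'' u')) * x u' := by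
      rw [← Finset.sum_sub_distrib]
      exact sum_congr rfl fun u' _ => by ring
    rw [this, ← hd, hBx, sub_self]
  have hkey := keylem x hx M hMsym hM0 y
  have hL : (∑ u, ∑ u', c u u' * (y u * y u'))
      - ∑ u, ∑ u', (∑ u'', x u'' / d u'' * (c u'' u * c u'' u')) * (y u * y u')
      = ∑ u, ∑ u', M u u' * (y u * y u') := by
    rw [← Finset.sum_sub_distrib]
    refine sum_congr rfl fun u _ => ?_
    rw [← Finset.sum_sub_distrib]
    refine sum_congr rfl fun u' _ => ?_
    simp only [hM]; ring
  have hR : (∑ u, ∑ u' ∈ univ.filter (fun u' => u < u'),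
          (∑ u'', x u'' / d u'' * (c u'' u * c u'' u'))
            * (x u' / x u * y u ^ 2 + x u / x u' * y u' ^ 2 - 2 * (y u * y u')))
        - ∑ u, ∑ u' ∈ univ.filter (fun u' => u < u'),
            c u u' * (x u' / x u * y u ^ 2 + x u / x u' * y u' ^ 2 - 2 * (y u * y u'))
      = - ∑ u, ∑ u' ∈ univ.filter (fun u' => u < u'),
          M u u' * (x u' / x u * y u ^ 2 + x u / x u' * y u' ^ 2 - 2 * (y u * y u')) := by
    rw [← Finset.sum_sub_distrib, ← Finset.sum_neg_distrib]
    refine sum_congr rfl fun u _ => ?_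
    rw [← Finset.sum_sub_distrib, ← Finset.sum_neg_distrib]
    refine sum_congr rfl fun u' _ => ?_
    simp only [hM]; ring
  rw [hL, hR, hkey]
end

section
/- Let A = (A_{u,u'}) be a symmetric real matrix indexed by a finite set, and suppose x_u > 0 are reals such that ∑_{u'} x_{u'} A_{u,u'} = 0 for every u (each row is orthogonal to the positive vector x). Then the quadratic form q(y) = ∑_{u,u'} A_{u,u'} y_u y_{u'} can be rewritten as q(y) = −∑_{u<u'} A_{u,u'} · ((x_{u'}/x_u) y_u² + (x_u/x_{u'}) y_{u'}² − 2 y_u y_{u'}) = −∑_{u<u'} A_{u,u'} L(u,u')², where L(u,u') = (x_{u'} y_u − x_u y_{u'})/√(x_u x_{u'}). -/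
open Finset

/-- If `A` is symmetric and each row of `A` is orthogonal to the positive vector `x`
(`A x = 0`), then `∑ A_{u,u'} y_u y_{u'} = −∑_{u<u'} A_{u,u'} L(u,u')²` with
`L(u,u') = (x_{u'} y_u − x_u y_{u'})/√(x_u x_{u'})`. -/
theorem stmt_14 (ι : Type*) [Fintype ι] [LinearOrder ι]
    (A : ι → ι → ℝ) (hAsymm : ∀ u u', A u u' = A u' u)
    (x : ι → ℝ) (hx : ∀ u, 0 < x u)
    (hAx : ∀ u, ∑ u', A u u' * x u' = 0) :
    ∀ y : ι → ℝ,
      ∑ u, ∑ u', A u u' * (y u * y u')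
        = - ∑ u, ∑ u' ∈ univ.filter (fun u' => u < u'),
            A u u' * ((x u' * y u - x u * y u') / Real.sqrt (x u * x u')) ^ 2 := by
  intro y
  set f : ι → ι → ℝ := fun u u' =>
    A u u' * ((x u' * y u - x u * y u') / Real.sqrt (x u * x u')) ^ 2 with hf
  have hfsymm : ∀ u u', f u u' = f u' u := by
    intro u u'
    simp only [hf]
    rw [hAsymm u u', mul_comm (x u) (x u')]
    ring_nf
  have hfdiag : ∀ u, f u u = 0 := by
    intro u; simp [hf]
  -- pointwise expansion
  have key : ∀ u u', f u u'
      = (y u)^2 / x u * (A u u' * x u') + (y u')^2 / x u' * (A u u' * x u)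
        - 2 * (A u u' * (y u * y u')) := by
    intro u u'
    have h1 : x u ≠ 0 := (hx u).ne'
    have h2 : x u' ≠ 0 := (hx u').ne'
    have hs : Real.sqrt (x u * x u') ^ 2 = x u * x u' :=
      Real.sq_sqrt (mul_pos (hx u) (hx u')).le
    simp only [hf, div_pow, hs]
    field_simp
    ring
  -- total double sum equals -2 * quadratic form
  have hT : ∑ u, ∑ u', f u u'
      = - 2 * ∑ u, ∑ u', A u u' * (y u * y u') := by
    have : ∑ u, ∑ u', f u u'
        = (∑ u, ∑ u', (y u)^2 / x u * (A u u' * x u'))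
          + (∑ u, ∑ u', (y u')^2 / x u' * (A u u' * x u))
          - 2 * ∑ u, ∑ u', A u u' * (y u * y u') := by
      rw [Finset.mul_sum]
      rw [← Finset.sum_add_distrib, ← Finset.sum_sub_distrib]
      refine Finset.sum_congr rfl fun u _ => ?_
      rw [Finset.mul_sum, ← Finset.sum_add_distrib, ← Finset.sum_sub_distrib]
      exact Finset.sum_congr rfl fun u' _ => key u u'
    rw [this]
    have h1 : ∑ u, ∑ u', (y u)^2 / x u * (A u u' * x u') = 0 := by
      refine Finset.sum_eq_zero fun u _ => ?_
      rw [← Finset.mul_sum, hAx u, mul_zero]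
    have h2 : ∑ u, ∑ u', (y u')^2 / x u' * (A u u' * x u) = 0 := by
      rw [Finset.sum_comm]
      refine Finset.sum_eq_zero fun u' _ => ?_
      rw [← Finset.mul_sum]
      have : ∑ u, A u u' * x u = 0 := by
        rw [← hAx u']
        exact Finset.sum_congr rfl fun u _ => by rw [hAsymm]
      rw [this, mul_zero]
    rw [h1, h2]; ring
  -- the total double sum is twice the strict upper triangular sum
  have hsplit : ∑ u, ∑ u', f u u'
      = 2 * ∑ u, ∑ u' ∈ univ.filter (fun u' => u < u'), f u u' := by
    have hdecomp : ∀ u : ι, ∑ u', f u u'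
        = ∑ u' ∈ univ.filter (fun u' => u < u'), f u u'
          + ∑ u' ∈ univ.filter (fun u' => u' < u), f u u' := by
      intro u
      rw [← Finset.sum_filter_add_sum_filter_not univ (fun u' => u < u') (f u)]
      congr 1
      rw [Finset.sum_filter, Finset.sum_filter]
      refine Finset.sum_congr rfl fun u' _ => ?_
      rcases lt_trichotomy u u' with h | h | h
      · simp [h, asymm h]
      · subst h; simp [hfdiag]
      · simp [h, not_lt.mpr h.le]
    have hswap : ∑ u, ∑ u' ∈ univ.filter (fun u' => u' < u), f u u'
        = ∑ u, ∑ u' ∈ univ.filter (fun u' => u < u'), f u u' := by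
      rw [Finset.sum_comm' (t' := univ) (s' := fun u' => univ.filter (fun u => u' < u))
        (by intro u u'; simp)]
      exact Finset.sum_congr rfl fun u' _ =>
        Finset.sum_congr rfl fun u _ => hfsymm u u'
    calc ∑ u, ∑ u', f u u'
        = ∑ u, (∑ u' ∈ univ.filter (fun u' => u < u'), f u u'
            + ∑ u' ∈ univ.filter (fun u' => u' < u), f u u') :=
          Finset.sum_congr rfl fun u _ => hdecomp u
      _ = ∑ u, ∑ u' ∈ univ.filter (fun u' => u < u'), f u u'
            + ∑ u, ∑ u' ∈ univ.filter (fun u' => u' < u), f u u' :=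
          Finset.sum_add_distrib
      _ = 2 * ∑ u, ∑ u' ∈ univ.filter (fun u' => u < u'), f u u' := by
          rw [hswap]; ring
  have := hT.symm.trans hsplit
  linarith
end
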